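/- arXiv:1906.03254 — 2 statements merged into one kernel-verified Lean document; each statement's English description precedes it below -/
import Mathlib

section
/- Let k ∈ ℝ and let h : ℝ² → ℝ be C² on ℝ² \ {0} and positively homogeneous of degree k. Let v ≠ 0 with k · h(v) ≠ 0. Then for every X ∈ ℝ²: D²h(v)(X, X) = (2·K₂(h)(v)/(k·h(v))²) · ρ_v(X)² + ((k − 1)/(k·h(v))) · (Dh(v)(X))². -/
/-- First partial derivative of `h : ℝ² → ℝ` in the `i`-th coordinate direction. -/
noncomputable def pd1 (h : (Fin 2 → ℝ) → ℝ) (i : Fin 2) (x : Fin 2 → ℝ) : ℝ :=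
  fderiv ℝ h x (Pi.single i 1)

/-- Second partial derivative of `h : ℝ² → ℝ`. -/
noncomputable def pd2 (h : (Fin 2 → ℝ) → ℝ) (i j : Fin 2) (x : Fin 2 → ℝ) : ℝ :=
  iteratedFDeriv ℝ 2 h x ![Pi.single i 1, Pi.single j 1]

/-- The relative invariant `K₂(h) = (1/2)(h₁₁h₂² − 2h₁₂h₁h₂ + h₂₂h₁²)` of binary forms. -/
noncomputable def K2 (h : (Fin 2 → ℝ) → ℝ) (x : Fin 2 → ℝ) : ℝ :=
  (1 / 2) * (pd2 h 0 0 x * (pd1 h 1 x) ^ 2 - 2 * pd2 h 0 1 x * pd1 h 0 x * pd1 h 1 x +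
    pd2 h 1 1 x * (pd1 h 0 x) ^ 2)

/-!
Euler's identity, applied to `h` and to `Dh`, which is homogeneous of degree `k - 1`, gives
`Dh(v) v = k h(v)` and `D²h(v)(v, ·) = (k - 1) Dh(v)`. Put `u = k h(v)` and `w = (h₂, -h₁)(v)`,
which spans the kernel of `Dh(v)`; then `u X = Dh(v)X • v + ρ_v(X) • w`. Expanding
`u² D²h(v)(X, X)` along this decomposition, the `v`-`v` term is `(k - 1) u (Dh(v)X)²`, the cross
term is `(k - 1) ρ_v(X) Dh(v)X · Dh(v)w = 0`, and the `w`-`w` term is `2 K₂(h)(v) ρ_v(X)²`.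
-/

open Filter Topology

section Homogeneous

variable {E F : Type*} [NormedAddCommGroup E] [NormedSpace ℝ E]
  [NormedAddCommGroup F] [NormedSpace ℝ F]

def IsPosHomogeneous (k : ℝ) (f : E → F) : Prop :=
  ∀ t : ℝ, 0 < t → ∀ x : E, x ≠ 0 → f (t • x) = t ^ k • f x

namespace IsPosHomogeneous

variable {k : ℝ} {f : E → F} {x : E}

/-- Euler's identity, obtained by differentiating `t ↦ f (t • x)` at `t = 1`. -/
theorem fderiv_apply_self (hf : IsPosHomogeneous k f) (hx : x ≠ 0)
    (hd : DifferentiableAt ℝ f x) : fderiv ℝ f x x = k • f x := by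
  have hray : HasDerivAt (fun t : ℝ => f (t • x)) (fderiv ℝ f x x) 1 := by
    have hline : HasDerivAt (fun t : ℝ => t • x) x 1 := by
      simpa using (hasDerivAt_id (1 : ℝ)).smul_const x
    have hfx : HasFDerivAt f (fderiv ℝ f x) ((fun t : ℝ => t • x) 1) := by
      simpa using hd.hasFDerivAt
    exact hfx.comp_hasDerivAt 1 hline
  have hpow : HasDerivAt (fun t : ℝ => t ^ k • f x) (k • f x) 1 := by
    simpa using (Real.hasDerivAt_rpow_const (x := 1) (p := k) (Or.inl one_ne_zero)).smul_const
      (f x)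
  have heq : (fun t : ℝ => f (t • x)) =ᶠ[𝓝 1] fun t => t ^ k • f x := by
    filter_upwards [eventually_gt_nhds one_pos] with t ht using hf t ht x hx
  exact hray.unique (hpow.congr_of_eventuallyEq heq)

theorem fderiv (hf : IsPosHomogeneous k f) (hd : ∀ x, x ≠ 0 → DifferentiableAt ℝ f x) :
    IsPosHomogeneous (k - 1) (_root_.fderiv ℝ f) := by
  intro t ht x hx
  have hscaled : HasFDerivAt (fun y => f (t • y)) (t • _root_.fderiv ℝ f (t • x)) x := by
    have := (hd _ (smul_ne_zero ht.ne' hx)).hasFDerivAt.comp x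
      ((hasFDerivAt_id x).const_smul t)
    simpa [Function.comp_def, ContinuousLinearMap.comp_smul] using this
  have heq : (fun y => f (t • y)) =ᶠ[𝓝 x] fun y => t ^ k • f y := by
    filter_upwards [isOpen_ne.mem_nhds hx] with y hy using hf t ht y hy
  have hD : t • _root_.fderiv ℝ f (t • x) = t ^ k • _root_.fderiv ℝ f x :=
    (hscaled.congr_of_eventuallyEq heq.symm).unique ((hd x hx).hasFDerivAt.const_smul _)
  rw [Real.rpow_sub_one ht.ne', div_eq_inv_mul, mul_smul, ← hD, smul_smul,
    inv_mul_cancel₀ ht.ne', one_smul]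

end IsPosHomogeneous

end Homogeneous

theorem ContinuousLinearMap.apply_fin_two {M : Type*} [AddCommGroup M] [Module ℝ M]
    [TopologicalSpace M] (L : (Fin 2 → ℝ) →L[ℝ] M) (x : Fin 2 → ℝ) :
    L x = x 0 • L (Pi.single 0 1) + x 1 • L (Pi.single 1 1) := by
  conv_lhs => rw [pi_eq_sum_univ' x, Fin.sum_univ_two]
  simp

def dualVec (g : (Fin 2 → ℝ) →L[ℝ] ℝ) : Fin 2 → ℝ :=
  ![g (Pi.single 1 1), -g (Pi.single 0 1)]

theorem apply_dualVec (g : (Fin 2 → ℝ) →L[ℝ] ℝ) : g (dualVec g) = 0 := by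
  rw [g.apply_fin_two]
  simp only [dualVec, Matrix.cons_val_zero, Matrix.cons_val_one, Matrix.cons_val_fin_one,
    smul_eq_mul, neg_mul]
  ring

theorem smul_eq_add_smul_dualVec (g : (Fin 2 → ℝ) →L[ℝ] ℝ) (v X : Fin 2 → ℝ) :
    g v • X = g X • v + (v 1 * X 0 - v 0 * X 1) • dualVec g := by
  rw [g.apply_fin_two v, g.apply_fin_two X]
  ext i
  fin_cases i <;>
    simp only [dualVec, Fin.zero_eta, Fin.mk_one, Pi.add_apply, Pi.smul_apply, Matrix.smul_cons,
      Matrix.smul_empty, Matrix.cons_val_zero, Matrix.cons_val_one, Matrix.cons_val_fin_one,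
      smul_eq_mul, mul_neg] <;>
    ring

theorem bilin_apply_dualVec_self (B : (Fin 2 → ℝ) →L[ℝ] (Fin 2 → ℝ) →L[ℝ] ℝ)
    (g : (Fin 2 → ℝ) →L[ℝ] ℝ) :
    B (dualVec g) (dualVec g) =
      B (Pi.single 0 1) (Pi.single 0 1) * g (Pi.single 1 1) ^ 2
      - (B (Pi.single 0 1) (Pi.single 1 1) + B (Pi.single 1 1) (Pi.single 0 1))
          * g (Pi.single 0 1) * g (Pi.single 1 1)
      + B (Pi.single 1 1) (Pi.single 1 1) * g (Pi.single 0 1) ^ 2 := by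
  rw [B.apply_fin_two, add_apply, smul_apply, smul_apply,
    ContinuousLinearMap.apply_fin_two _ (dualVec g), ContinuousLinearMap.apply_fin_two _ (dualVec g)]
  simp only [dualVec, Matrix.cons_val_zero, Matrix.cons_val_one, Matrix.cons_val_fin_one,
    smul_eq_mul, neg_mul]
  ring

theorem sq_mul_bilin_apply_self (B : (Fin 2 → ℝ) →L[ℝ] (Fin 2 → ℝ) →L[ℝ] ℝ)
    (g : (Fin 2 → ℝ) →L[ℝ] ℝ) {v : Fin 2 → ℝ} {c : ℝ}
    (hB : ∀ x y, B x y = B y x) (hBv : B v = c • g) (X : Fin 2 → ℝ) :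
    g v ^ 2 * B X X =
      c * g v * g X ^ 2 + (v 1 * X 0 - v 0 * X 1) ^ 2 * B (dualVec g) (dualVec g) := by
  set R := v 1 * X 0 - v 0 * X 1
  calc g v ^ 2 * B X X = B (g v • X) (g v • X) := by
        simp only [map_smul, smul_apply, smul_eq_mul]; ring
    _ = B (g X • v + R • dualVec g) (g X • v + R • dualVec g) := by
        rw [smul_eq_add_smul_dualVec]
    _ = g X ^ 2 * B v v + 2 * g X * R * B v (dualVec g) + R ^ 2 * B (dualVec g) (dualVec g) := by
        simp only [map_add, map_smul, add_apply, smul_apply, smul_eq_mul, hB (dualVec g) v]; ring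
    _ = c * g v * g X ^ 2 + R ^ 2 * B (dualVec g) (dualVec g) := by
        simp only [hBv, smul_apply, smul_eq_mul, apply_dualVec, mul_zero, add_zero]; ring

/-- The paper's computation `Θ₂⁰ = (K₂/(ku)²)·ρ²` combined with the splitting
`Θ₂ = Θ₂⁰ + ((k−1)/(2kΘ₀))Θ₁²` for binary forms: for `h : ℝ² → ℝ` of class `C²` away from
the origin and positively homogeneous of degree `k`, at `v ≠ 0` with `k·h(v) ≠ 0`,
`D²h(v)(X,X) = (2K₂(h)(v)/(k·h(v))²)·ρ_v(X)² + ((k−1)/(k·h(v)))·(Dh(v)(X))²`. -/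
theorem hessian_binary_form (k : ℝ) (h : (Fin 2 → ℝ) → ℝ)
    (hf : ContDiffOn ℝ 2 h {x | x ≠ 0})
    (hhom : ∀ t : ℝ, 0 < t → ∀ x : Fin 2 → ℝ, x ≠ 0 → h (t • x) = t ^ k * h x)
    (v : Fin 2 → ℝ) (hv : v ≠ 0) (hkh : k * h v ≠ 0) (X : Fin 2 → ℝ) :
    iteratedFDeriv ℝ 2 h v ![X, X] =
      (2 * K2 h v / (k * h v) ^ 2) * (v 1 * X 0 - v 0 * X 1) ^ 2 +
      ((k - 1) / (k * h v)) * (fderiv ℝ h v X) ^ 2 := by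
  rw [iteratedFDeriv_two_apply]
  simp only [Matrix.cons_val_zero, Matrix.cons_val_one]
  have hhom : IsPosHomogeneous k h := hhom
  have hC2 : ∀ x, x ≠ 0 → ContDiffAt ℝ 2 h x := fun x hx => hf.contDiffAt (isOpen_ne.mem_nhds hx)
  have hd : ∀ x, x ≠ 0 → DifferentiableAt ℝ h x :=
    fun x hx => (hC2 x hx).differentiableAt two_ne_zero
  set B := fderiv ℝ (fderiv ℝ h) v
  set g := fderiv ℝ h v
  have hsymm : ∀ x y, B x y = B y x := fun x y => (hC2 v hv).isSymmSndFDerivAt (by simp) x y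
  have hgv : g v = k * h v := (hhom.fderiv_apply_self hv (hd v hv)).trans (smul_eq_mul _ _)
  have hBv : B v = (k - 1) • g := (hhom.fderiv hd).fderiv_apply_self hv
    (((hC2 v hv).fderiv_right (m := 1) le_rfl).differentiableAt one_ne_zero)
  have hK2 : 2 * K2 h v = B (dualVec g) (dualVec g) := by
    rw [bilin_apply_dualVec_self, hsymm (Pi.single 1 1)]
    simp only [K2, pd1, pd2, iteratedFDeriv_two_apply, Matrix.cons_val_zero, Matrix.cons_val_one]
    ring
  have key := sq_mul_bilin_apply_self B g hsymm hBv X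
  rw [hgv, ← hK2] at key
  obtain ⟨hk, hhv⟩ := mul_ne_zero_iff.mp hkh
  field_simp
  linear_combination key
end

section
/- Let h : ℝ² → ℝ be C³, let A : ℝ² → ℝ² be an invertible linear map, and let x ∈ ℝ² be a point with K₂(h)(A x) ≠ 0. Then J₃(h ∘ A)(x) = J₃(h)(A x), where J₃(h) = K₃(h)² / K₂(h)³. Together with J₀(h) = h, the function J₃ is a differential invariant of binary forms under the general linear group. -/
/-- Third partial derivative of `h : ℝ² → ℝ`. -/
noncomputable def pd3 (h : (Fin 2 → ℝ) → ℝ) (i j m : Fin 2) (x : Fin 2 → ℝ) : ℝ :=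
  iteratedFDeriv ℝ 3 h x ![Pi.single i 1, Pi.single j 1, Pi.single m 1]

/-- `K₃(h) = (1/6)(h₁₁₁h₂³ − 3h₁₁₂h₂²h₁ + 3h₁₂₂h₂h₁² − h₂₂₂h₁³)`. -/
noncomputable def K3 (h : (Fin 2 → ℝ) → ℝ) (x : Fin 2 → ℝ) : ℝ :=
  (1 / 6) * (pd3 h 0 0 0 x * (pd1 h 1 x) ^ 3 -
    3 * pd3 h 0 0 1 x * (pd1 h 1 x) ^ 2 * pd1 h 0 x +
    3 * pd3 h 0 1 1 x * pd1 h 1 x * (pd1 h 0 x) ^ 2 -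
    pd3 h 1 1 1 x * (pd1 h 0 x) ^ 3)

/-- The paper's differential invariant `J₃(h) = K₃(h)²/K₂(h)³` of binary forms. -/
noncomputable def J3 (h : (Fin 2 → ℝ) → ℝ) (x : Fin 2 → ℝ) : ℝ :=
  (K3 h x) ^ 2 / (K2 h x) ^ 3

/-!
With `w = (h₂, -h₁)`, symmetry of the derivatives gives `K₂(h) = D²h(w, w) / 2` and
`K₃(h) = D³h(w, w, w) / 6`. For `g = h ∘ A` the chain rule gives
`Dᵏg(x)(v, …, v) = Dᵏh(Ax)(Av, …, Av)`, while the vector `w` of `g` at `x` is sent by `A` to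
`det A` times the vector `w` of `h` at `Ax`. Hence `K₂` and `K₃` pick up the factors `(det A)²`
and `(det A)³`, which cancel in `K₃² / K₂³`.
-/

section IteratedDerivatives

variable {E F : Type*} [NormedAddCommGroup E] [NormedAddCommGroup F]

theorem iteratedFDeriv_three_apply {𝕜 : Type*} [NontriviallyNormedField 𝕜] [NormedSpace 𝕜 E]
    [NormedSpace 𝕜 F] (h : E → F) (x : E) (m : Fin 3 → E) :
    iteratedFDeriv 𝕜 3 h x m = fderiv 𝕜 (fderiv 𝕜 (fderiv 𝕜 h)) x (m 0) (m 1) (m 2) := by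
  rw [iteratedFDeriv_succ_apply_right, iteratedFDeriv_two_apply]
  rfl

variable [NormedSpace ℝ E] [NormedSpace ℝ F] {h : E → F}

theorem ContDiff.fderiv_fderiv_fderiv_apply_comm_left (hh : ContDiff ℝ 3 h) (x u v w : E) :
    fderiv ℝ (fderiv ℝ (fderiv ℝ h)) x u v w = fderiv ℝ (fderiv ℝ (fderiv ℝ h)) x v u w :=
  DFunLike.congr_fun
    (((hh.fderiv_right (m := 2) (by norm_num)).contDiffAt.isSymmSndFDerivAt (by simp)) u v) w

theorem ContDiff.fderiv_fderiv_fderiv_apply_comm_right (hh : ContDiff ℝ 3 h) (x u v w : E) :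
    fderiv ℝ (fderiv ℝ (fderiv ℝ h)) x u v w = fderiv ℝ (fderiv ℝ (fderiv ℝ h)) x u w v := by
  have hd : Differentiable ℝ (fderiv ℝ (fderiv ℝ h)) :=
    ((hh.fderiv_right (m := 2) (by norm_num)).fderiv_right (m := 1) (by norm_num)).differentiable
      (by norm_num)
  have hderiv_apply : ∀ v w, fderiv ℝ (fun y => fderiv ℝ (fderiv ℝ h) y v w) x u =
      fderiv ℝ (fderiv ℝ (fderiv ℝ h)) x u v w := by
    intro v w
    rw [fderiv_clm_apply ((hd x).clm_apply (differentiableAt_const v)) (differentiableAt_const w),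
      fderiv_clm_apply (hd x) (differentiableAt_const v)]
    simp
  have hsymm : (fun y => fderiv ℝ (fderiv ℝ h) y v w) = fun y => fderiv ℝ (fderiv ℝ h) y w v :=
    funext fun y => (hh.contDiffAt.isSymmSndFDerivAt (by simp; norm_num)) v w
  rw [← hderiv_apply, hsymm, hderiv_apply]

end IteratedDerivatives

/-- The vector `w` with `ℓ v = det ![w, v]`; for `ℓ = dh` it is `(h₂, -h₁)`. -/
def skewDual {R : Type*} [CommRing R] (ℓ : (Fin 2 → R) → R) : Fin 2 → R :=
  ℓ (Pi.single 1 1) • Pi.single 0 1 - ℓ (Pi.single 0 1) • Pi.single 1 1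

theorem LinearMap.map_skewDual_comp {R : Type*} [CommRing R]
    (A : (Fin 2 → R) →ₗ[R] (Fin 2 → R)) (ℓ : (Fin 2 → R) →ₗ[R] R) :
    A (skewDual (fun v => ℓ (A v))) = LinearMap.det A • skewDual ℓ := by
  set e₀ : Fin 2 → R := Pi.single 0 1
  set e₁ : Fin 2 → R := Pi.single 1 1
  have hdet : LinearMap.det A = A e₀ 0 * A e₁ 1 - A e₀ 1 * A e₁ 0 := by
    rw [← LinearMap.det_toMatrix (Pi.basisFun R (Fin 2)), Matrix.det_fin_two]
    simp [e₀, e₁, mul_comm]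
  have hℓ : ∀ v, ℓ v = v 0 * ℓ e₀ + v 1 * ℓ e₁ := by
    intro v
    conv_lhs => rw [show v = v 0 • e₀ + v 1 • e₁ by ext i; fin_cases i <;> simp [e₀, e₁]]
    simp
  simp only [skewDual, map_sub, map_smul]
  rw [hℓ (A e₀), hℓ (A e₁), hdet]
  ext i
  fin_cases i <;>
  · simp only [Fin.zero_eta, Fin.mk_one, Pi.sub_apply, Pi.smul_apply, smul_eq_mul, e₀, e₁,
      Pi.single_eq_same, Pi.single_eq_of_ne zero_ne_one, Pi.single_eq_of_ne one_ne_zero]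
    ring

section BinaryForms

variable {h : (Fin 2 → ℝ) → ℝ}

theorem K2_eq_iteratedFDeriv {y : Fin 2 → ℝ} (hh : ContDiffAt ℝ 2 h y) :
    K2 h y = iteratedFDeriv ℝ 2 h y (fun _ => skewDual (fderiv ℝ h y)) / 2 := by
  have hsymm := hh.isSymmSndFDerivAt (by simp) (Pi.single 0 1) (Pi.single 1 1)
  simp only [K2, pd1, pd2, iteratedFDeriv_two_apply, skewDual, map_sub, map_smul,
    _root_.sub_apply, _root_.smul_apply, Matrix.cons_val_zero, Matrix.cons_val_one, smul_eq_mul,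
    hsymm]
  ring

theorem K3_eq_iteratedFDeriv (hh : ContDiff ℝ 3 h) (y : Fin 2 → ℝ) :
    K3 h y = iteratedFDeriv ℝ 3 h y (fun _ => skewDual (fderiv ℝ h y)) / 6 := by
  have hcomm₁₂ := hh.fderiv_fderiv_fderiv_apply_comm_left y
  have hcomm₂₃ := hh.fderiv_fderiv_fderiv_apply_comm_right y
  simp only [K3, pd1, pd3, iteratedFDeriv_three_apply, skewDual, map_sub, map_smul,
    _root_.sub_apply, _root_.smul_apply, Matrix.cons_val_zero, Matrix.cons_val_one,
    Matrix.cons_val_two, Matrix.tail_cons, Matrix.head_cons, smul_eq_mul]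
  set D := fderiv ℝ (fderiv ℝ (fderiv ℝ h)) y
  set e₀ : Fin 2 → ℝ := Pi.single 0 1
  set e₁ : Fin 2 → ℝ := Pi.single 1 1
  have h100 : D e₁ e₀ e₀ = D e₀ e₀ e₁ := (hcomm₁₂ _ _ _).trans (hcomm₂₃ _ _ _)
  have h010 : D e₀ e₁ e₀ = D e₀ e₀ e₁ := hcomm₂₃ _ _ _
  have h110 : D e₁ e₁ e₀ = D e₀ e₁ e₁ := (hcomm₂₃ _ _ _).trans (hcomm₁₂ _ _ _)
  have h101 : D e₁ e₀ e₁ = D e₀ e₁ e₁ := hcomm₁₂ _ _ _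
  rw [h100, h010, h110, h101]
  ring

theorem iteratedFDeriv_comp_linearMap_apply_skewDual {n : ℕ} (hh : ContDiff ℝ n h) (hn : n ≠ 0)
    (A : (Fin 2 → ℝ) →ₗ[ℝ] (Fin 2 → ℝ)) (x : Fin 2 → ℝ) :
    iteratedFDeriv ℝ n (fun y => h (A y)) x (fun _ => skewDual (fderiv ℝ (fun y => h (A y)) x)) =
      LinearMap.det A ^ n * iteratedFDeriv ℝ n h (A x) (fun _ => skewDual (fderiv ℝ h (A x))) := by
  set B := LinearMap.toContinuousLinearMap A
  have hcomp : (fun y => h (A y)) = h ∘ B := rfl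
  have hfderiv : fderiv ℝ (h ∘ B) x = (fderiv ℝ h (B x)).comp B := by
    rw [fderiv_comp x (hh.differentiable (by exact_mod_cast hn) _) B.differentiableAt, B.fderiv]
  have hw : B (skewDual (fderiv ℝ (h ∘ B) x)) = LinearMap.det A • skewDual (fderiv ℝ h (A x)) := by
    rw [hfderiv]
    exact A.map_skewDual_comp (fderiv ℝ h (A x)).toLinearMap
  rw [hcomp, B.iteratedFDeriv_comp_right hh x le_rfl,
    ContinuousMultilinearMap.compContinuousLinearMap_apply]
  simp only [hw, ContinuousMultilinearMap.map_smul_univ, Finset.prod_const, Finset.card_fin,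
    smul_eq_mul]
  rfl

theorem K2_comp_linearMap (hh : ContDiff ℝ 2 h) (A : (Fin 2 → ℝ) →ₗ[ℝ] (Fin 2 → ℝ))
    (x : Fin 2 → ℝ) : K2 (fun y => h (A y)) x = LinearMap.det A ^ 2 * K2 h (A x) := by
  have hg : ContDiff ℝ 2 (fun y => h (A y)) := hh.comp A.toContinuousLinearMap.contDiff
  rw [K2_eq_iteratedFDeriv hg.contDiffAt, K2_eq_iteratedFDeriv hh.contDiffAt,
    iteratedFDeriv_comp_linearMap_apply_skewDual hh two_ne_zero, mul_div_assoc]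

theorem K3_comp_linearMap (hh : ContDiff ℝ 3 h) (A : (Fin 2 → ℝ) →ₗ[ℝ] (Fin 2 → ℝ))
    (x : Fin 2 → ℝ) : K3 (fun y => h (A y)) x = LinearMap.det A ^ 3 * K3 h (A x) := by
  have hg : ContDiff ℝ 3 (fun y => h (A y)) := hh.comp A.toContinuousLinearMap.contDiff
  rw [K3_eq_iteratedFDeriv hg, K3_eq_iteratedFDeriv hh,
    iteratedFDeriv_comp_linearMap_apply_skewDual hh three_ne_zero, mul_div_assoc]

end BinaryForms

theorem J3_invariance_general (h : (Fin 2 → ℝ) → ℝ) (hh : ContDiff ℝ 3 h)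
    (A : (Fin 2 → ℝ) →ₗ[ℝ] (Fin 2 → ℝ)) (hA : LinearMap.det A ≠ 0)
    (x : Fin 2 → ℝ) :
    J3 (fun y => h (A y)) x = J3 h (A x) := by
  rw [J3, J3, K2_comp_linearMap (hh.of_le (by norm_num)), K3_comp_linearMap hh, mul_pow, mul_pow,
    ← pow_mul, ← pow_mul]
  exact mul_div_mul_left _ _ (pow_ne_zero 6 hA)

/-- `J₃ = K₃²/K₂³` is a differential invariant of binary forms under the general linear
group: `J₃(h∘A)(x) = J₃(h)(Ax)` for every invertible linear `A` and `K₂(h)(Ax) ≠ 0`. -/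
theorem J3_invariance (h : (Fin 2 → ℝ) → ℝ) (hh : ContDiff ℝ 3 h)
    (A : (Fin 2 → ℝ) →ₗ[ℝ] (Fin 2 → ℝ)) (hA : LinearMap.det A ≠ 0)
    (x : Fin 2 → ℝ) (hx : K2 h (A x) ≠ 0) :
    J3 (fun y => h (A y)) x = J3 h (A x) :=
  J3_invariance_general h hh A hA x
end
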